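/- Let g : ℝⁿ → ℝ be differentiable with L_g-Lipschitz gradient, c > 0, and consider the discrete update θ⁺ = θ - γ d with ∇g(θ)ᵀ d ≥ c·g(θ) and ‖d‖ ≤ D for some D > 0. Fix ḡ > 0. If γ c ≤ 1 and (L_g/2)γ² D² ≤ γ c ḡ, then g(θ) ≤ ḡ implies g(θ⁺) ≤ ḡ. -/

import Mathlib

open RealInnerProductSpace

/-- Descent lemma: if `g` has `L`-Lipschitz gradient, then
`g (x + v) ≤ g x + ⟪∇g x, v⟫ + L/2 ‖v‖²`. -/
lemma descent_lemma {n : ℕ} (g : EuclideanSpace ℝ (Fin n) → ℝ) (Lg : ℝ) (hLg : 0 < Lg)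
    (hg : Differentiable ℝ g)
    (hlip : LipschitzWith (Real.toNNReal Lg) (gradient g))
    (x v : EuclideanSpace ℝ (Fin n)) :
    g (x + v) ≤ g x + ⟪gradient g x, v⟫ + Lg / 2 * ‖v‖ ^ 2 := by
  set φ : ℝ → ℝ := fun t => g (x + t • v) with hφ
  have hdφ : ∀ t : ℝ, HasDerivAt φ ⟪gradient g (x + t • v), v⟫ t := by
    intro t
    have hline : HasDerivAt (fun t : ℝ => x + t • v) v t := by
      simpa using ((hasDerivAt_id t).smul_const v).const_add x
    have hgrad := (hg (x + t • v)).hasGradientAt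
    have hfd := hgrad.hasFDerivAt
    have := hfd.comp_hasDerivAt t hline
    simp at this ⊢
    exact this
  set h : ℝ → ℝ := fun t =>
    g x + t * ⟪gradient g x, v⟫ + Lg * ‖v‖ ^ 2 * t ^ 2 / 2 - φ t with hh
  have hdh : ∀ t : ℝ, HasDerivAt h
      (⟪gradient g x, v⟫ + Lg * ‖v‖ ^ 2 * t - ⟪gradient g (x + t • v), v⟫) t := by
    intro t
    have h1 : HasDerivAt (fun t : ℝ => g x + t * ⟪gradient g x, v⟫ + Lg * ‖v‖ ^ 2 * t ^ 2 / 2)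
        (⟪gradient g x, v⟫ + Lg * ‖v‖ ^ 2 * t) t := by
      have ha : HasDerivAt (fun t : ℝ => t * ⟪gradient g x, v⟫) ⟪gradient g x, v⟫ t := by
        simpa using (hasDerivAt_id t).mul_const ⟪gradient g x, v⟫
      have hb : HasDerivAt (fun t : ℝ => Lg * ‖v‖ ^ 2 * t ^ 2 / 2) (Lg * ‖v‖ ^ 2 * t) t := by
        have := ((hasDerivAt_pow 2 t).const_mul (Lg * ‖v‖ ^ 2)).div_const 2
        exact this.congr_deriv (by ring)
      exact (ha.const_add (g x)).add hb
    exact h1.sub (hdφ t)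
  have key : ∀ t ∈ Set.Icc (0 : ℝ) 1, 0 ≤ deriv h t := by
    intro t ht
    rw [(hdh t).deriv]
    have hbound : ⟪gradient g (x + t • v), v⟫ - ⟪gradient g x, v⟫ ≤ Lg * ‖v‖ ^ 2 * t := by
      rw [← inner_sub_left]
      calc ⟪gradient g (x + t • v) - gradient g x, v⟫
          ≤ ‖gradient g (x + t • v) - gradient g x‖ * ‖v‖ := real_inner_le_norm _ _
        _ ≤ Lg * ‖t • v‖ * ‖v‖ := by
            have hcoe : ((Real.toNNReal Lg : NNReal) : ℝ) = Lg := Real.coe_toNNReal _ hLg.le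
            have hL : ‖gradient g (x + t • v) - gradient g x‖ ≤ Lg * ‖t • v‖ := by
              have := hlip.dist_le_mul (x + t • v) x
              rw [hcoe, dist_eq_norm, dist_eq_norm] at this
              simpa using this
            exact mul_le_mul_of_nonneg_right hL (norm_nonneg v)
        _ = Lg * ‖v‖ ^ 2 * t := by
            rw [norm_smul, Real.norm_eq_abs, abs_of_nonneg ht.1]
            ring
    linarith
  have hmono : MonotoneOn h (Set.Icc (0 : ℝ) 1) := by
    apply monotoneOn_of_deriv_nonneg (convex_Icc 0 1)
    · have hdiff : Differentiable ℝ h := fun t => (hdh t).differentiableAt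
      exact hdiff.continuous.continuousOn
    · intro t _
      exact (hdh t).differentiableAt.differentiableWithinAt
    · intro t ht
      exact key t (interior_subset ht)
  have h01 : h 0 ≤ h 1 := hmono (by norm_num) (by norm_num) (by norm_num)
  have hφ0 : φ 0 = g x := by simp [hφ]
  have hφ1 : φ 1 = g (x + v) := by simp [hφ]
  simp only [hh] at h01
  rw [hφ0, hφ1] at h01
  have : (0:ℝ) * ⟪gradient g x, v⟫ = 0 := zero_mul _
  nlinarith [h01]

/-- Discrete forward invariance of the sublevel set `{g ≤ ḡ}` under the step
`θ⁺ = θ - γ d` when `⟪∇g θ, d⟫ ≥ c g θ`, `‖d‖ ≤ D`, `γ c ≤ 1` and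
`(L_g/2) γ² D² ≤ γ c ḡ`. -/
theorem stmt14 {n : ℕ} (g : EuclideanSpace ℝ (Fin n) → ℝ) (Lg : ℝ) (hLg : 0 < Lg)
    (hg : Differentiable ℝ g)
    (hlip : LipschitzWith (Real.toNNReal Lg) (gradient g))
    (c : ℝ) (hc : 0 < c)
    (θ d : EuclideanSpace ℝ (Fin n)) (D : ℝ) (hD : 0 < D) (hdD : ‖d‖ ≤ D)
    (hbar : c * g θ ≤ ⟪gradient g θ, d⟫)
    (gbar : ℝ) (hgbar : 0 < gbar)
    (γ : ℝ) (hγ0 : 0 < γ) (hγc : γ * c ≤ 1)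
    (hγ2 : Lg / 2 * γ ^ 2 * D ^ 2 ≤ γ * c * gbar)
    (hθ : g θ ≤ gbar) :
    g (θ - γ • d) ≤ gbar := by
  have hdesc := descent_lemma g Lg hLg hg hlip θ (-(γ • d))
  rw [← sub_eq_add_neg] at hdesc
  have hinner : ⟪gradient g θ, -(γ • d)⟫ = -(γ * ⟪gradient g θ, d⟫) := by
    rw [inner_neg_right, inner_smul_right]
  have hnorm : ‖-(γ • d)‖ ^ 2 = γ ^ 2 * ‖d‖ ^ 2 := by
    rw [norm_neg, norm_smul, Real.norm_eq_abs, abs_of_nonneg hγ0.le, mul_pow]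
  rw [hinner, hnorm] at hdesc
  have hd2 : ‖d‖ ^ 2 ≤ D ^ 2 := by
    have := norm_nonneg d
    nlinarith
  have h1 : g (θ - γ • d) ≤ g θ - γ * c * g θ + Lg / 2 * γ ^ 2 * D ^ 2 := by
    have h2 : γ * (c * g θ) ≤ γ * ⟪gradient g θ, d⟫ := by
      exact mul_le_mul_of_nonneg_left hbar hγ0.le
    have h3 : Lg / 2 * γ ^ 2 * ‖d‖ ^ 2 ≤ Lg / 2 * γ ^ 2 * D ^ 2 :=
      mul_le_mul_of_nonneg_left hd2 (by positivity)
    nlinarith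
  nlinarith [mul_nonneg (sub_nonneg.mpr hγc) (sub_nonneg.mpr hθ)]
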